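/- arXiv:2510.03145 — 5 statements merged into one kernel-verified Lean document; each statement's English description precedes it below -/
import Mathlib

section
/- If F is a free group and {A_α}_{α∈I} is a free factor system of F, then {A_α}_{α∈I} is a malnormal collection in F; that is, for all indices α, β ∈ I and every g ∈ F, if g⁻¹ A_α g ∩ A_β ≠ 1 then α = β and g ∈ A_α. -/
/-!
Conjugating each `A α` by `f α` gives subgroups `B α` with `B = ⋆ B α` and `F = B ⋆ K`. In a free
product `⋆ G i`, if `x g = g y` for nontrivial letters `x ∈ G i`, `y ∈ G j`, then `i = j` (project
onto `G i`) and `g ∈ G i`: comparing the reduced words of `x g` and `g y` shows that the first or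
the last letter of `g` lies in `G i`, and peeling it off (from `g` or from `g⁻¹`) shortens `g`.
Applied to `F = B ⋆ K` this puts the conjugator into `B`, and applied to `B = ⋆ B α` it gives the
claim.
-/

/-- A family of subgroups of `G` generates an internal free product if the canonical
homomorphism from their abstract free product (coproduct), induced by the inclusions,
is injective. -/
def IsInternalFreeProduct {G : Type*} [Group G] {ι : Type*} (H : ι → Subgroup G) : Prop :=
  Function.Injective (Monoid.CoprodI.lift (fun i => (H i).subtype))

/-- `conjSub g A` is the conjugate subgroup `g A g⁻¹`. -/
def conjSub {G : Type*} [Group G] (g : G) (A : Subgroup G) : Subgroup G :=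
  A.map (MulAut.conj g).toMonoidHom

/-- `A` is a free factor of `G` if there is a subgroup `K` such that `A` and `K`
generate an internal free product equal to `G`. -/
def IsFreeFactor {G : Type*} [Group G] (A : Subgroup G) : Prop :=
  ∃ K : Subgroup G,
    IsInternalFreeProduct (fun b : Bool => bif b then A else K) ∧ A ⊔ K = ⊤

/-- A collection of non-trivial subgroups of `G` is a free factor system if there are
elements `f i` such that the conjugates `(f i)⁻¹ * A i * (f i)` generate an internal
free product which is a free factor of `G`. -/
def IsFreeFactorSystem {G : Type*} [Group G] {ι : Type*} (A : ι → Subgroup G) : Prop :=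
  (∀ i, A i ≠ ⊥) ∧
  ∃ f : ι → G, IsInternalFreeProduct (fun i => conjSub (f i)⁻¹ (A i)) ∧
    IsFreeFactor (⨆ i, conjSub (f i)⁻¹ (A i))

theorem inv_mul_mul_ne_one {G : Type*} [Group G] {b : G} (a : G) (hb : b ≠ 1) :
    a⁻¹ * b * a ≠ 1 :=
  fun h => hb ((conj_eq_one_iff (a := a⁻¹)).mp (by rwa [inv_inv]))

namespace Monoid.CoprodI

variable {ι : Type*} {G : ι → Type*} [∀ i, Group (G i)]

theorem eq_of_of_mul_eq_mul_of {i j : ι} {x : G i} {y : G j} {g : CoprodI G} (hx : x ≠ 1)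
    (h : of x * g = g * of y) : i = j := by
  classical
  by_contra hij
  exact hx (by simpa [Pi.mulSingle_eq_of_ne (Ne.symm hij)]
    using congrArg (lift (Pi.mulSingle i (MonoidHom.id (G i)))) h)

namespace NeWord

theorem length_toList_inv {i j : ι} (w : NeWord G i j) :
    w.inv.toList.length = w.toList.length := by
  induction w with
  | singleton => rfl
  | append w₁ _ w₂ ih₁ ih₂ => simp [inv, ih₁, ih₂, add_comm]

theorem exists_prod_eq_of_mul {i j : ι} (w : NeWord G i j) :
    ∃ (m : G i) (u : Word G), w.prod = of m * u.prod ∧ u.toList.length < w.toList.length := by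
  have hhead : w.toWord.toList.head? = some ⟨i, w.head⟩ := w.toList_head?
  have hlen : w.toWord.toList.length = w.toList.length := rfl
  change ∃ (m : G i) (u : Word G), w.toWord.prod = of m * u.prod ∧ _
  generalize w.toWord = v at hhead hlen ⊢
  induction v using Word.consRecOn with
  | empty => simp [Word.empty] at hhead
  | cons k m u h₁ h₂ _ =>
    obtain ⟨rfl, -⟩ := Sigma.mk.inj_iff.mp (Option.some.inj hhead)
    exact ⟨m, u, Word.prod_cons _ _ _ _ _, by simp [← hlen]⟩

theorem of_mul_prod_ne_prod_mul_of {i j k l : ι} (w : NeWord G k l) (hik : i ≠ k)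
    (hlj : l ≠ j) {x : G i} {y : G j} (hx : x ≠ 1) (hy : y ≠ 1) :
    of x * w.prod ≠ w.prod * of y := by
  classical
  intro h
  have hprod : ((singleton x hx).append hik w).prod = (w.append hlj (singleton y hy)).prod := by
    simpa [append_prod] using h
  have hword : ((singleton x hx).append hik w).toWord = (w.append hlj (singleton y hy)).toWord :=
    Word.equiv.symm.injective hprod
  have hhead := congrArg (fun v : Word G => v.toList.head?) hword
  simp only [toWord, toList_head?, append_head, singleton_head, Option.some.injEq,
    Sigma.mk.injEq] at hhead
  exact hik hhead.1

end NeWord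

theorem prod_mem_range_of_of_mul_eq_mul_of {i : ι} (v : Word G) {x y : G i} (hx : x ≠ 1)
    (hy : y ≠ 1) (h : of x * v.prod = v.prod * of y) :
    v.prod ∈ (of : G i →* CoprodI G).range := by
  classical
  by_cases hv : v = Word.empty
  · simp [hv, Word.prod_empty]
  obtain ⟨k, l, w, rfl⟩ := NeWord.of_word v hv
  change w.prod ∈ _
  change of x * w.prod = w.prod * of y at h
  by_cases hk : k = i
  · subst hk
    obtain ⟨m, u, hw, hlt⟩ := w.exists_prod_eq_of_mul
    have hu : u.prod ∈ (of : G k →* CoprodI G).range :=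
      prod_mem_range_of_of_mul_eq_mul_of u (x := m⁻¹ * x * m) (inv_mul_mul_ne_one m hx) hy
        (by rw [hw] at h; simp only [map_mul, map_inv, mul_assoc] at h ⊢
            rw [h, inv_mul_cancel_left])
    rw [hw]
    exact mul_mem ⟨m, rfl⟩ hu
  by_cases hl : l = i
  · subst hl
    obtain ⟨m, u, hw, hlt⟩ := w.inv.exists_prod_eq_of_mul
    have hlt' : u.toList.length < w.toWord.toList.length := w.length_toList_inv ▸ hlt
    have h' : (of y)⁻¹ * w.inv.prod = w.inv.prod * (of x)⁻¹ := by
      simpa [mul_inv_rev] using (congrArg (·⁻¹) h).symm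
    have hu : u.prod ∈ (of : G l →* CoprodI G).range :=
      prod_mem_range_of_of_mul_eq_mul_of u (x := m⁻¹ * y⁻¹ * m) (y := x⁻¹)
        (inv_mul_mul_ne_one m (inv_ne_one.mpr hy)) (inv_ne_one.mpr hx)
        (by rw [hw] at h'; simp only [map_mul, map_inv, mul_assoc] at h' ⊢
            rw [h', inv_mul_cancel_left])
    rw [← inv_mem_iff, ← NeWord.inv_prod, hw]
    exact mul_mem ⟨m, rfl⟩ hu
  exact absurd h (w.of_mul_prod_ne_prod_mul_of (Ne.symm hk) hl hx hy)
termination_by v.toList.length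

theorem eq_and_mem_range_of_of_mul_eq_mul_of {i j : ι} {x : G i} {y : G j} {g : CoprodI G}
    (hx : x ≠ 1) (hy : y ≠ 1) (h : of x * g = g * of y) :
    i = j ∧ g ∈ (of : G i →* CoprodI G).range := by
  classical
  obtain rfl := eq_of_of_mul_eq_mul_of hx h
  have hg : (Word.equiv g).prod = g := Word.equiv.symm_apply_apply g
  exact ⟨rfl, hg ▸ prod_mem_range_of_of_mul_eq_mul_of _ hx hy (by rwa [hg])⟩

end Monoid.CoprodI

theorem mem_conjSub_iff {G : Type*} [Group G] {g x : G} {A : Subgroup G} :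
    x ∈ conjSub g A ↔ g⁻¹ * x * g ∈ A := by
  rw [conjSub, Subgroup.mem_map_equiv, MulAut.conj_symm_apply]

open Monoid

theorem IsInternalFreeProduct.eq_and_mem_of_mul_eq_mul {G : Type*} [Group G] {ι : Type*}
    {H : ι → Subgroup G} (hH : IsInternalFreeProduct H) {i j : ι} {x y g : G}
    (hx : x ∈ H i) (hy : y ∈ H j) (hx₁ : x ≠ 1) (hy₁ : y ≠ 1) (hg : g ∈ ⨆ i, H i)
    (h : x * g = g * y) :
    i = j ∧ g ∈ H i := by
  set φ := CoprodI.lift fun i ↦ (H i).subtype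
  have hrange : φ.range = ⨆ i, H i := by simp [φ, CoprodI.range_eq_iSup]
  obtain ⟨u, rfl⟩ := hrange ▸ hg
  have hφx : φ (CoprodI.of (M := fun i ↦ H i) ⟨x, hx⟩) = x := CoprodI.lift_of _ _
  have hφy : φ (CoprodI.of (M := fun i ↦ H i) ⟨y, hy⟩) = y := CoprodI.lift_of _ _
  have hu : CoprodI.of (M := fun i ↦ H i) ⟨x, hx⟩ * u
      = u * CoprodI.of (M := fun i ↦ H i) ⟨y, hy⟩ :=
    hH (by rw [map_mul, map_mul, hφx, hφy, h])
  obtain ⟨rfl, c, rfl⟩ := CoprodI.eq_and_mem_range_of_of_mul_eq_mul_of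
    (by simpa using hx₁) (by simpa using hy₁) hu
  exact ⟨rfl, by simp [φ]⟩

theorem IsFreeFactor.mem_of_mul_eq_mul {G : Type*} [Group G] {A : Subgroup G}
    (hA : IsFreeFactor A) {x y g : G} (hx : x ∈ A) (hy : y ∈ A) (hx₁ : x ≠ 1) (hy₁ : y ≠ 1)
    (h : x * g = g * y) :
    g ∈ A := by
  obtain ⟨K, hK, hAK⟩ := hA
  have hg : g ∈ ⨆ b : Bool, bif b then A else K := by simp [iSup_bool_eq, hAK]
  exact (hK.eq_and_mem_of_mul_eq_mul (i := true) (j := true) hx hy hx₁ hy₁ hg h).2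

theorem IsFreeFactorSystem.eq_and_mem_of_mul_eq_mul {G : Type*} [Group G] {ι : Type*}
    {A : ι → Subgroup G} (hA : IsFreeFactorSystem A) {α β : ι} {x y g : G} (hx : x ∈ A α)
    (hy : y ∈ A β) (hx₁ : x ≠ 1) (hy₁ : y ≠ 1) (h : x * g = g * y) :
    α = β ∧ g ∈ A α := by
  obtain ⟨-, f, hB, hfactor⟩ := hA
  have hmem : ∀ {i} {z : G}, z ∈ A i → (f i)⁻¹ * z * f i ∈ conjSub (f i)⁻¹ (A i) := by
    intro i z hz; simpa [mem_conjSub_iff, mul_assoc] using hz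
  have hh : ((f α)⁻¹ * x * f α) * ((f α)⁻¹ * g * f β)
      = ((f α)⁻¹ * g * f β) * ((f β)⁻¹ * y * f β) := by
    simp only [mul_assoc, mul_inv_cancel_left]; rw [← mul_assoc x, h, mul_assoc]
  have hg := hfactor.mem_of_mul_eq_mul (Subgroup.mem_iSup_of_mem α (hmem hx))
    (Subgroup.mem_iSup_of_mem β (hmem hy)) (inv_mul_mul_ne_one _ hx₁) (inv_mul_mul_ne_one _ hy₁)
    hh
  obtain ⟨rfl, hg'⟩ := hB.eq_and_mem_of_mul_eq_mul (hmem hx) (hmem hy)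
    (inv_mul_mul_ne_one _ hx₁) (inv_mul_mul_ne_one _ hy₁) hg hh
  exact ⟨rfl, by simpa [mem_conjSub_iff, mul_assoc] using hg'⟩

theorem freeFactorSystem_isMalnormalCollection_general
    {F : Type*} [Group F] {ι : Type*}
    (A : ι → Subgroup F) (hA : IsFreeFactorSystem A) :
    ∀ (α β : ι) (g : F), conjSub g⁻¹ (A α) ⊓ A β ≠ ⊥ → α = β ∧ g ∈ A α := by
  intro α β g hne
  obtain ⟨z, hz, hz₁⟩ := (Subgroup.bot_or_exists_ne_one _).resolve_left hne
  obtain ⟨hzα, hzβ⟩ := Subgroup.mem_inf.mp hz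
  rw [mem_conjSub_iff, inv_inv] at hzα
  exact hA.eq_and_mem_of_mul_eq_mul hzα hzβ (mt conj_eq_one_iff.mp hz₁) hz₁ (by group)

/-- A free factor system of a free group is a malnormal collection: if a conjugate
`g⁻¹ A_α g` meets `A_β` non-trivially then `α = β` and `g ∈ A_α`. -/
theorem freeFactorSystem_isMalnormalCollection
    {F : Type*} [Group F] [IsFreeGroup F] {ι : Type*}
    (A : ι → Subgroup F) (hA : IsFreeFactorSystem A) :
    ∀ (α β : ι) (g : F), conjSub g⁻¹ (A α) ⊓ A β ≠ ⊥ → α = β ∧ g ∈ A α :=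
  freeFactorSystem_isMalnormalCollection_general A hA
end

section
/- Let 𝔽 be a free group, ψ : 𝔽 → 𝔽 an injective homomorphism, and G = M(ψ) with stable letter t. Let H ≤ 𝔽 be a finitely generated subgroup, k ≥ 1 an integer, and f ∈ 𝔽 an element such that f⁻¹ ψ^k(H) f ≤ H. Then the subgroup ⟨H ∪ {t^k f}⟩ of G is isomorphic to the mapping torus M(φ), where φ : H → H is the injective endomorphism h ↦ f⁻¹ ψ^k(h) f; indeed the canonical homomorphism M(φ) → G restricting to the inclusion on H and sending the stable letter of M(φ) to t^k f is injective with image ⟨H ∪ {t^k f}⟩. -/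
/-- The mapping torus `M(ψ)` of an injective endomorphism `ψ` of `F`: the HNN extension
`⟨F, t ∣ t⁻¹ f t = ψ(f)⟩`, realised as the HNN extension of `F` with associated subgroups
`ψ(F)` and `F = ⊤` and identifying isomorphism induced by `ψ`. -/
noncomputable abbrev MappingTorus {F : Type*} [Group F] (ψ : F →* F)
    (hψ : Function.Injective ψ) : Type _ :=
  HNNExtension F ψ.range ⊤ ((MonoidHom.ofInjective hψ).symm.trans Subgroup.topEquiv.symm)

/-- The canonical embedding `F →* M(ψ)`. -/
noncomputable def MappingTorus.of {F : Type*} [Group F] (ψ : F →* F)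
    (hψ : Function.Injective ψ) : F →* MappingTorus ψ hψ :=
  HNNExtension.of

/-- The stable letter of `M(ψ)`; it satisfies `t⁻¹ * of f * t = of (ψ f)`. -/
noncomputable def MappingTorus.t {F : Type*} [Group F] (ψ : F →* F)
    (hψ : Function.Injective ψ) : MappingTorus ψ hψ :=
  HNNExtension.t

/-! Conjugation by `tᵏ f` acts on `H` as `φ`, so `H ↪ M(ψ)` and `s ↦ tᵏ f` define a homomorphism
`θ : M(φ) → M(ψ)` whose image is generated by `H` and `tᵏ f`. Every element of `M(φ)` has the form
`sᵃ h s⁻ᵇ`, with image `(tᵏ f)ᵃ h (tᵏ f)⁻ᵇ`. Counting `t`-exponents, this is trivial only if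
`k a = k b`, i.e. `a = b` since `k ≥ 1`, and then `h = 1`. -/

theorem Subgroup.iterate_apply_mem_iterate_map {G : Type*} [Group G] (ψ : G →* G)
    {H : Subgroup G} (k : ℕ) {x : G} (hx : x ∈ H) : (⇑ψ)^[k] x ∈ (Subgroup.map ψ)^[k] H := by
  induction k with
  | zero => exact hx
  | succ n ih =>
    rw [Function.iterate_succ_apply', Function.iterate_succ_apply']
    exact Subgroup.mem_map_of_mem ψ ih

section ConjIterate

variable {G : Type*} [Group G] (ψ : G →* G) (k : ℕ) (f : G) {H : Subgroup G}
  (hinv : conjSub f⁻¹ ((Subgroup.map ψ)^[k] H) ≤ H)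

def Subgroup.conjIterate : H →* H where
  toFun h := ⟨f⁻¹ * (⇑ψ)^[k] h * f, hinv ⟨_, Subgroup.iterate_apply_mem_iterate_map ψ k h.2,
    by simp [MulAut.conj]⟩⟩
  map_one' := by ext; simp
  map_mul' a b := by
    ext
    simp only [Subgroup.coe_mul, iterate_map_mul]
    group

@[simp] theorem Subgroup.coe_conjIterate (h : H) :
    (Subgroup.conjIterate ψ k f hinv h : G) = f⁻¹ * (⇑ψ)^[k] h * f := rfl

theorem Subgroup.conjIterate_injective (hψ : Function.Injective ψ) :
    Function.Injective (Subgroup.conjIterate ψ k f hinv) := fun a b hab =>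
  Subtype.ext <| hψ.iterate k <| by simpa using congrArg Subtype.val hab

end ConjIterate

namespace MappingTorus

variable {F : Type*} [Group F] (χ : F →* F) (hχ : Function.Injective χ)

theorem of_mul_t (x : F) : of χ hχ x * t χ hχ = t χ hχ * of χ hχ (χ x) := by
  have hχx : ((((MonoidHom.ofInjective hχ).symm.trans Subgroup.topEquiv.symm).symm
      ⟨x, trivial⟩ : χ.range) : F) = χ x := rfl
  have h := HNNExtension.of_mul_t (φ := (MonoidHom.ofInjective hχ).symm.trans
    Subgroup.topEquiv.symm) ⟨x, trivial⟩
  rwa [hχx] at h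

theorem of_mul_t_pow (x : F) (m : ℕ) :
    of χ hχ x * t χ hχ ^ m = t χ hχ ^ m * of χ hχ ((⇑χ)^[m] x) := by
  induction m with
  | zero => simp
  | succ n ih =>
    rw [pow_succ, ← mul_assoc, ih, mul_assoc, of_mul_t, Function.iterate_succ_apply',
      ← mul_assoc, ← pow_succ]

theorem inv_t_pow_mul_of (x : F) (m : ℕ) :
    (t χ hχ ^ m)⁻¹ * of χ hχ x = of χ hχ ((⇑χ)^[m] x) * (t χ hχ ^ m)⁻¹ := by
  rw [inv_mul_eq_iff_eq_mul, ← mul_assoc, ← of_mul_t_pow, mul_inv_cancel_right]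

theorem of_mul_t_pow_mul_of (x f : F) (k : ℕ) :
    of χ hχ x * (t χ hχ ^ k * of χ hχ f) =
      t χ hχ ^ k * of χ hχ f * of χ hχ (f⁻¹ * (⇑χ)^[k] x * f) := by
  rw [← mul_assoc, of_mul_t_pow, mul_assoc, mul_assoc, ← map_mul, ← map_mul]
  congr 2
  group

theorem exists_eq_t_pow_mul_of_mul_inv_t_pow (g : MappingTorus χ hχ) :
    ∃ (a b : ℕ) (x : F), g = t χ hχ ^ a * of χ hχ x * (t χ hχ ^ b)⁻¹ := by
  induction g using HNNExtension.induction_on with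
  | of x => exact ⟨0, 0, x, by simp [of]⟩
  | t => exact ⟨1, 0, 1, by simp [t]⟩
  | inv g ih =>
    obtain ⟨a, b, x, rfl⟩ := ih
    exact ⟨b, a, x⁻¹, by rw [map_inv]; group⟩
  | mul g h ihg ihh =>
    obtain ⟨a, b, x, rfl⟩ := ihg
    obtain ⟨c, d, y, rfl⟩ := ihh
    rcases le_total b c with hbc | hcb
    · obtain ⟨e, rfl⟩ := Nat.exists_eq_add_of_le hbc
      refine ⟨a + e, d, (⇑χ)^[e] x * y, ?_⟩
      calc t χ hχ ^ a * of χ hχ x * (t χ hχ ^ b)⁻¹ *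
            (t χ hχ ^ (b + e) * of χ hχ y * (t χ hχ ^ d)⁻¹)
          = t χ hχ ^ a * (of χ hχ x * t χ hχ ^ e) * of χ hχ y * (t χ hχ ^ d)⁻¹ := by
            rw [pow_add]; group
        _ = _ := by rw [of_mul_t_pow, map_mul, pow_add]; group
    · obtain ⟨e, rfl⟩ := Nat.exists_eq_add_of_le hcb
      refine ⟨a, d + e, x * (⇑χ)^[e] y, ?_⟩
      calc t χ hχ ^ a * of χ hχ x * (t χ hχ ^ (c + e))⁻¹ *
            (t χ hχ ^ c * of χ hχ y * (t χ hχ ^ d)⁻¹)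
          = t χ hχ ^ a * of χ hχ x * ((t χ hχ ^ e)⁻¹ * of χ hχ y) * (t χ hχ ^ d)⁻¹ := by
            rw [pow_add]; group
        _ = _ := by rw [inv_t_pow_mul_of, map_mul, pow_add]; group

theorem of_injective : Function.Injective (of χ hχ) := HNNExtension.of_injective _

noncomputable def degree : MappingTorus χ hχ →* Multiplicative ℤ :=
  HNNExtension.lift 1 (Multiplicative.ofAdd 1) fun _ => by simp

@[simp] theorem degree_of (x : F) : degree χ hχ (of χ hχ x) = 1 := by
  simp [degree, of]

@[simp] theorem degree_t : degree χ hχ (t χ hχ) = Multiplicative.ofAdd 1 := by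
  simp [degree, t]

variable {G : Type*} [Group G] (j : F →* G) (T : G) (hT : ∀ x, j x * T = T * j (χ x))

noncomputable def lift : MappingTorus χ hχ →* G :=
  HNNExtension.lift j T fun a => by
    obtain ⟨_, x, rfl⟩ := a
    have hx : (MonoidHom.ofInjective hχ).symm ⟨χ x, x, rfl⟩ = x :=
      (MulEquiv.symm_apply_eq _).2 (Subtype.ext rfl)
    simp only [MulEquiv.trans_apply, hx]
    exact (hT x).symm

@[simp] theorem lift_of (x : F) : lift χ hχ j T hT (of χ hχ x) = j x :=
  HNNExtension.lift_of ..

@[simp] theorem lift_t : lift χ hχ j T hT (t χ hχ) = T :=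
  HNNExtension.lift_t ..

theorem range_lift : (lift χ hχ j T hT).range = Subgroup.closure (Set.range j ∪ {T}) := by
  refine le_antisymm ?_ ((Subgroup.closure_le _).2 ?_)
  · rintro _ ⟨g, rfl⟩
    induction g using HNNExtension.induction_on with
    | of x => exact Subgroup.subset_closure (Or.inl ⟨x, (lift_of χ hχ j T hT x).symm⟩)
    | t => exact Subgroup.subset_closure (Or.inr (lift_t χ hχ j T hT))
    | mul g h hg hh => exact (map_mul (lift χ hχ j T hT) g h).symm ▸ mul_mem hg hh
    | inv g hg => exact (map_inv (lift χ hχ j T hT) g).symm ▸ inv_mem hg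
  · rintro _ (⟨x, rfl⟩ | hT')
    · exact ⟨of χ hχ x, lift_of χ hχ j T hT x⟩
    · exact ⟨t χ hχ, (lift_t χ hχ j T hT).trans hT'.symm⟩

theorem lift_injective (hj : Function.Injective j) {K : Type*} [Group K] [IsMulTorsionFree K]
    (d : G →* K) (hdj : ∀ x, d (j x) = 1) (hdT : d T ≠ 1) :
    Function.Injective (lift χ hχ j T hT) := by
  rw [injective_iff_map_eq_one]
  intro g hg
  obtain ⟨a, b, x, rfl⟩ := exists_eq_t_pow_mul_of_mul_inv_t_pow χ hχ g
  simp only [map_mul, map_inv, map_pow, lift_of, lift_t] at hg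
  have hab : a = b := by
    have hdeg := congrArg d hg
    simp only [map_mul, map_inv, map_pow, hdj, mul_one, map_one, mul_inv_eq_one] at hdeg
    exact IsMulTorsionFree.pow_right_injective hdT hdeg
  subst hab
  have hx : x = 1 := hj (by simpa using hg)
  simp [hx]

end MappingTorus

theorem submappingTorus_of_invariant_general
    {𝔽 : Type*} [Group 𝔽] (ψ : 𝔽 →* 𝔽) (hψ : Function.Injective ψ)
    (H : Subgroup 𝔽) (k : ℕ) (hk : 1 ≤ k) (f : 𝔽)
    (hinv : conjSub f⁻¹ ((Subgroup.map ψ)^[k] H) ≤ H) :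
    ∃ φ : ↥H →* ↥H,
      (∀ h : ↥H, (φ h : 𝔽) = f⁻¹ * (⇑ψ)^[k] (h : 𝔽) * f) ∧
      ∃ (hφ : Function.Injective φ)
        (θ : MappingTorus φ hφ →* MappingTorus ψ hψ),
        (∀ h : ↥H, θ (MappingTorus.of φ hφ h) = MappingTorus.of ψ hψ (h : 𝔽)) ∧
        θ (MappingTorus.t φ hφ) = (MappingTorus.t ψ hψ) ^ k * MappingTorus.of ψ hψ f ∧
        Function.Injective θ ∧
        θ.range = Subgroup.closure ((MappingTorus.of ψ hψ) '' (H : Set 𝔽) ∪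
          {(MappingTorus.t ψ hψ) ^ k * MappingTorus.of ψ hψ f}) := by
  open MappingTorus in
  have hφ := Subgroup.conjIterate_injective ψ k f hinv hψ
  have hrel (h : H) : (of ψ hψ).comp H.subtype h * (t ψ hψ ^ k * of ψ hψ f) =
      (t ψ hψ ^ k * of ψ hψ f) * (of ψ hψ).comp H.subtype (Subgroup.conjIterate ψ k f hinv h) :=
    of_mul_t_pow_mul_of ψ hψ h f k
  refine ⟨_, Subgroup.coe_conjIterate ψ k f hinv, hφ, lift _ hφ _ _ hrel, lift_of _ hφ _ _ hrel,
    lift_t _ hφ _ _ hrel, ?_, ?_⟩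
  · refine lift_injective _ hφ _ _ hrel ((of_injective ψ hψ).comp Subtype.val_injective)
      (degree ψ hψ) (fun _ => degree_of ψ hψ _) ?_
    simpa using Nat.one_le_iff_ne_zero.mp hk
  · rw [range_lift, MonoidHom.coe_comp, Set.range_comp, Subgroup.coe_subtype, Subtype.range_coe]

/-- Sub-mapping tori: if `H ≤ 𝔽` is finitely generated, `k ≥ 1` and `f ∈ 𝔽` satisfy
`f⁻¹ ψᵏ(H) f ≤ H`, then `⟨H, tᵏf⟩ ≤ M(ψ)` is isomorphic to the mapping torus `M(φ)` of
`φ : H → H`, `h ↦ f⁻¹ ψᵏ(h) f`, via the canonical homomorphism restricting to the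
inclusion on `H` and sending the stable letter to `tᵏ f`. -/
theorem submappingTorus_of_invariant
    {𝔽 : Type*} [Group 𝔽] [IsFreeGroup 𝔽] (ψ : 𝔽 →* 𝔽) (hψ : Function.Injective ψ)
    (H : Subgroup 𝔽) (hHfg : H.FG) (k : ℕ) (hk : 1 ≤ k) (f : 𝔽)
    (hinv : conjSub f⁻¹ ((Subgroup.map ψ)^[k] H) ≤ H) :
    ∃ φ : ↥H →* ↥H,
      (∀ h : ↥H, (φ h : 𝔽) = f⁻¹ * (⇑ψ)^[k] (h : 𝔽) * f) ∧
      ∃ (hφ : Function.Injective φ)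
        (θ : MappingTorus φ hφ →* MappingTorus ψ hψ),
        (∀ h : ↥H, θ (MappingTorus.of φ hφ h) = MappingTorus.of ψ hψ (h : 𝔽)) ∧
        θ (MappingTorus.t φ hφ) = (MappingTorus.t ψ hψ) ^ k * MappingTorus.of ψ hψ f ∧
        Function.Injective θ ∧
        θ.range = Subgroup.closure ((MappingTorus.of ψ hψ) '' (H : Set 𝔽) ∪
          {(MappingTorus.t ψ hψ) ^ k * MappingTorus.of ψ hψ f}) :=
  submappingTorus_of_invariant_general ψ hψ H k hk f hinv
end

section
/- Let Z₁ be a group, X₁ ≤ Z₁ a subgroup, ψ : X₁ → Z₁ an injective homomorphism, and let G = ⟨Z₁, t ∣ t⁻¹ x t = ψ(x) for all x ∈ X₁⟩ be the HNN extension of Z₁ with associated subgroups X₁ and ψ(X₁). Let Z₂ ≤ Z₁ be a subgroup, set X₂ = Z₂ ∩ X₁, and assume ψ(X₂) = Z₂ ∩ ψ(X₁). Then the canonical homomorphism from the HNN extension ⟨Z₂, s ∣ s⁻¹ x s = ψ(x) for all x ∈ X₂⟩ (of Z₂ with associated subgroups X₂ and ψ(X₂)) to G, restricting to the inclusion on Z₂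 and sending s ↦ t, is injective; its image is the subgroup H = ⟨Z₂ ∪ {t}⟩ of G, and moreover Z₂ = H ∩ Z₁ and X₂ = H ∩ X₁. -/
/-- The HNN extension `⟨Z, t ∣ t⁻¹ x t = ψ(x), ∀ x ∈ X⟩` of `Z` over an injective
homomorphism `ψ : X → Z` defined on a subgroup `X ≤ Z`, with associated subgroups
`ψ(X)` and `X`. -/
noncomputable abbrev HNNEndo {Z : Type*} [Group Z] (X : Subgroup Z) (ψ : ↥X →* Z)
    (hψ : Function.Injective ψ) : Type _ :=
  HNNExtension Z ψ.range X (MonoidHom.ofInjective hψ).symm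

/-- The canonical embedding `Z →* HNNEndo X ψ hψ`. -/
noncomputable def HNNEndo.of {Z : Type*} [Group Z] (X : Subgroup Z) (ψ : ↥X →* Z)
    (hψ : Function.Injective ψ) : Z →* HNNEndo X ψ hψ :=
  HNNExtension.of

/-- The stable letter of `HNNEndo X ψ hψ`; it satisfies `t⁻¹ (of x) t = of (ψ x)`. -/
noncomputable def HNNEndo.t {Z : Type*} [Group Z] (X : Subgroup Z) (ψ : ↥X →* Z)
    (hψ : Function.Injective ψ) : HNNEndo X ψ hψ :=
  HNNExtension.t

/-!
The map `θ` is induced by the inclusion `Z₂ → Z₁` and `s ↦ t`. The hypotheses say precisely that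
an element of `Z₂` lies in an associated subgroup of the small extension if and only if it lies
in the corresponding associated subgroup of `G`. Hence a reduced word over `Z₂` stays reduced when
read in `G`, and Britton's lemma in `G` shows that `θ g ∈ Z₁` forces `g ∈ Z₂`. Injectivity of `θ`
and the descriptions of `H ∩ Z₁` and `H ∩ X₁` follow at once, and `H` is the image of `θ` because
`θ` maps generators to generators.
-/

namespace HNNExtension

open NormalWord

variable {G H : Type*} [Group G] [Group H] {A B : Subgroup G} {φ : A ≃* B}
  {A' B' : Subgroup H} {φ' : A' ≃* B'}

theorem exists_reducedWord_prod_eq (g : HNNExtension G A B φ) :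
    ∃ w : ReducedWord G A B, w.prod φ = g := by
  obtain ⟨d⟩ := TransversalPair.nonempty G A B
  exact ⟨(g • (empty : NormalWord d)).toReducedWord, by simp⟩

section Map

variable (f : H →* G) (hfA : ∀ a : A', f a ∈ A) (hφ : ∀ a : A', f (φ' a) = φ ⟨f a, hfA a⟩)

def map : HNNExtension H A' B' φ' →* HNNExtension G A B φ :=
  lift (of.comp f) t fun a => by
    simpa [hφ a] using t_mul_of (φ := φ) ⟨f a, hfA a⟩

@[simp]
theorem map_of (h : H) : map f hfA hφ (of h) = of (f h) :=
  lift_of _ _ _ h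

@[simp]
theorem map_t : map f hfA hφ t = t :=
  lift_t _ _ _

theorem range_map : (map f hfA hφ).range = Subgroup.closure (of '' (f.range : Set G) ∪ {t}) := by
  apply le_antisymm
  · rintro _ ⟨g, rfl⟩
    induction g using induction_on with
    | of h => exact Subgroup.subset_closure (Or.inl ⟨f h, ⟨h, rfl⟩, (map_of f hfA hφ h).symm⟩)
    | t => exact Subgroup.subset_closure (Or.inr (map_t f hfA hφ))
    | mul a b ha hb => rw [map_mul]; exact mul_mem ha hb
    | inv a ha => rw [map_inv]; exact inv_mem ha
  · rw [Subgroup.closure_le]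
    rintro _ (⟨_, ⟨h, rfl⟩, rfl⟩ | rfl)
    · exact ⟨of h, map_of f hfA hφ h⟩
    · exact ⟨t, map_t f hfA hφ⟩

variable {f}

def NormalWord.ReducedWord.map (hA : ∀ h, f h ∈ A → h ∈ A') (hB : ∀ h, f h ∈ B → h ∈ B')
    (w : ReducedWord H A' B') : ReducedWord G A B where
  head := f w.head
  toList := w.toList.map (Prod.map id f)
  chain := List.isChain_map _ |>.2 <| w.chain.imp fun a _ hab hmem => hab <| by
    change f a.2 ∈ toSubgroup A B a.1 at hmem
    rcases Int.units_eq_one_or a.1 with h | h <;> rw [h] at hmem ⊢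
    exacts [hA _ hmem, hB _ hmem]

theorem prod_reducedWord_map (hA : ∀ h, f h ∈ A → h ∈ A') (hB : ∀ h, f h ∈ B → h ∈ B')
    (w : ReducedWord H A' B') :
    (w.map hA hB).prod φ = map f hfA hφ (w.prod φ') := by
  simp [ReducedWord.prod, ReducedWord.map, map_list_prod, Function.comp_def]

theorem mem_range_of_of_map_mem_range_of (hA : ∀ h, f h ∈ A → h ∈ A')
    (hB : ∀ h, f h ∈ B → h ∈ B') {g : HNNExtension H A' B' φ'}
    (hg : map f hfA hφ g ∈ (of : G →* _).range) : g ∈ (of : H →* _).range := by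
  obtain ⟨w, rfl⟩ := exists_reducedWord_prod_eq g
  rw [← prod_reducedWord_map hfA hφ hA hB] at hg
  have hw : w.toList = [] :=
    List.map_eq_nil_iff.mp (ReducedWord.toList_eq_nil_of_mem_of_range φ _ hg)
  exact ⟨w.head, by simp [ReducedWord.prod, hw]⟩

theorem map_injective (hA : ∀ h, f h ∈ A → h ∈ A') (hB : ∀ h, f h ∈ B → h ∈ B')
    (hf : Function.Injective f) : Function.Injective (map f hfA hφ) := by
  rw [injective_iff_map_eq_one]
  intro g hg
  obtain ⟨h, rfl⟩ := mem_range_of_of_map_mem_range_of hfA hφ hA hB (hg ▸ one_mem _)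
  rw [map_of, ← map_one of] at hg
  rw [(injective_iff_map_eq_one f).mp hf h (of_injective (φ := φ) hg), map_one]

theorem range_map_inf_map_of (hA : ∀ h, f h ∈ A → h ∈ A') (hB : ∀ h, f h ∈ B → h ∈ B')
    (K : Subgroup G) :
    (map f hfA hφ).range ⊓ K.map of = (f.range ⊓ K).map of := by
  apply le_antisymm
  · rintro _ ⟨⟨g, rfl⟩, k, hk, hgk⟩
    obtain ⟨h, rfl⟩ := mem_range_of_of_map_mem_range_of hfA hφ hA hB ⟨k, hgk⟩
    rw [map_of] at hgk ⊢
    exact ⟨f h, ⟨⟨h, rfl⟩, of_injective (φ := φ) hgk ▸ hk⟩, rfl⟩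
  · rintro _ ⟨_, ⟨⟨h, rfl⟩, hk⟩, rfl⟩
    exact ⟨⟨of h, map_of f hfA hφ h⟩, f h, hk, rfl⟩

end Map

end HNNExtension

namespace MonoidHom

variable {Z : Type*} [Group Z] {X : Subgroup Z} (ψ : X →* Z) (Y : Subgroup Z)
  (hY : ∀ x : X, (x : Z) ∈ Y → ψ x ∈ Y)

def restrictSubgroupOf : (Y ⊓ X).subgroupOf Y →* Y where
  toFun x := ⟨ψ ⟨x, (Subgroup.mem_subgroupOf.mp x.2).2⟩, hY _ (Subgroup.mem_subgroupOf.mp x.2).1⟩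
  map_one' := Subtype.ext ψ.map_one
  map_mul' x y := Subtype.ext (ψ.map_mul ⟨x, _⟩ ⟨y, _⟩)

variable {ψ Y}

theorem restrictSubgroupOf_injective (hψ : Function.Injective ψ) :
    Function.Injective (ψ.restrictSubgroupOf Y hY) := fun _ _ h =>
  Subtype.ext <| Subtype.ext <| congrArg (Subtype.val : X → Z) (hψ (congrArg Subtype.val h))

theorem coe_mem_range_of_mem_range_restrictSubgroupOf (y : (ψ.restrictSubgroupOf Y hY).range) :
    ((y : Y) : Z) ∈ ψ.range := by
  obtain ⟨_, ⟨x, rfl⟩⟩ := y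
  exact ⟨_, rfl⟩

theorem mem_range_restrictSubgroupOf_of_coe_mem_range
    (hint : Subgroup.map ψ ((Y ⊓ X).subgroupOf X) = Y ⊓ ψ.range) {y : Y} (hy : (y : Z) ∈ ψ.range) :
    y ∈ (ψ.restrictSubgroupOf Y hY).range := by
  obtain ⟨x, hx, hxy⟩ := hint.ge ⟨y.2, hy⟩
  exact ⟨⟨⟨x, (Subgroup.mem_subgroupOf.mp hx).1⟩, hx⟩, Subtype.ext hxy⟩

theorem coe_ofInjective_symm_restrictSubgroupOf (hψ : Function.Injective ψ)
    (hψY : Function.Injective (ψ.restrictSubgroupOf Y hY)) (y : (ψ.restrictSubgroupOf Y hY).range) :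
    (((ofInjective hψY).symm y : Y) : Z) =
      (ofInjective hψ).symm ⟨y, coe_mem_range_of_mem_range_restrictSubgroupOf hY y⟩ := by
  set x := (ofInjective hψY).symm y
  have hx : ψ ⟨x, (Subgroup.mem_subgroupOf.mp x.2).2⟩ = ψ ((ofInjective hψ).symm
      ⟨y, coe_mem_range_of_mem_range_restrictSubgroupOf hY y⟩) := by
    rw [apply_ofInjective_symm]
    exact congrArg Subtype.val (apply_ofInjective_symm hψY y)
  exact congrArg Subtype.val (hψ hx)

end MonoidHom

/-- Induced HNN splittings of subgroups (Proposition 6.1 of the paper): let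
`G = ⟨Z₁, t ∣ t⁻¹ x t = ψ(x), ∀ x ∈ X₁⟩`, let `Z₂ ≤ Z₁`, `X₂ = Z₂ ∩ X₁` and assume
`ψ(X₂) = Z₂ ∩ ψ(X₁)`.  Then the canonical homomorphism
`⟨Z₂, s ∣ s⁻¹ x s = ψ(x), ∀ x ∈ X₂⟩ →* G` (restriction of the inclusion, `s ↦ t`) is
injective with image `H = ⟨Z₂, t⟩`, and `Z₂ = H ∩ Z₁`, `X₂ = H ∩ X₁`. -/
theorem induced_hnn_splitting
    {Z₁ : Type*} [Group Z₁] (X₁ : Subgroup Z₁) (ψ : ↥X₁ →* Z₁)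
    (hψ : Function.Injective ψ) (Z₂ : Subgroup Z₁)
    (hint : Subgroup.map ψ ((Z₂ ⊓ X₁).subgroupOf X₁) = Z₂ ⊓ ψ.range) :
    ∃ ψ₂ : ↥((Z₂ ⊓ X₁).subgroupOf Z₂) →* ↥Z₂,
      (∀ x : ↥((Z₂ ⊓ X₁).subgroupOf Z₂),
        ((ψ₂ x : ↥Z₂) : Z₁) =
          ψ ⟨((x : ↥Z₂) : Z₁), (Subgroup.mem_subgroupOf.mp x.2).2⟩) ∧
      ∃ (hψ₂ : Function.Injective ψ₂)
        (θ : HNNEndo ((Z₂ ⊓ X₁).subgroupOf Z₂) ψ₂ hψ₂ →* HNNEndo X₁ ψ hψ),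
        (∀ z : ↥Z₂,
          θ (HNNEndo.of ((Z₂ ⊓ X₁).subgroupOf Z₂) ψ₂ hψ₂ z) =
            HNNEndo.of X₁ ψ hψ (z : Z₁)) ∧
        θ (HNNEndo.t ((Z₂ ⊓ X₁).subgroupOf Z₂) ψ₂ hψ₂) = HNNEndo.t X₁ ψ hψ ∧
        Function.Injective θ ∧
        θ.range = Subgroup.closure
          ((HNNEndo.of X₁ ψ hψ) '' (Z₂ : Set Z₁) ∪ {HNNEndo.t X₁ ψ hψ}) ∧
        Subgroup.map (HNNEndo.of X₁ ψ hψ) Z₂ =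
          θ.range ⊓ Subgroup.map (HNNEndo.of X₁ ψ hψ) ⊤ ∧
        Subgroup.map (HNNEndo.of X₁ ψ hψ) (Z₂ ⊓ X₁) =
          θ.range ⊓ Subgroup.map (HNNEndo.of X₁ ψ hψ) X₁ := by
  have hY : ∀ x : X₁, (x : Z₁) ∈ Z₂ → ψ x ∈ Z₂ := fun x hx =>
    (hint.le ⟨x, Subgroup.mem_subgroupOf.mpr ⟨hx, x.2⟩, rfl⟩).1
  have hψ₂ := MonoidHom.restrictSubgroupOf_injective hY hψ
  have hA (z : Z₂) (hz : (z : Z₁) ∈ ψ.range) :=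
    MonoidHom.mem_range_restrictSubgroupOf_of_coe_mem_range hY hint hz
  have hB (z : Z₂) (hz : (z : Z₁) ∈ X₁) : z ∈ (Z₂ ⊓ X₁).subgroupOf Z₂ :=
    Subgroup.mem_subgroupOf.mpr ⟨z.2, hz⟩
  have hfA := MonoidHom.coe_mem_range_of_mem_range_restrictSubgroupOf hY
  have hφ := MonoidHom.coe_ofInjective_symm_restrictSubgroupOf hY hψ hψ₂
  simp only [HNNEndo.of, HNNEndo.t]
  refine ⟨_, fun _ => rfl, hψ₂, HNNExtension.map Z₂.subtype hfA hφ,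
    HNNExtension.map_of _ hfA hφ, HNNExtension.map_t _ hfA hφ,
    HNNExtension.map_injective hfA hφ hA hB Z₂.subtype_injective, ?_, ?_, ?_⟩
  · exact (HNNExtension.range_map _ hfA hφ).trans (by rw [Subgroup.range_subtype])
  · refine ((HNNExtension.range_map_inf_map_of hfA hφ hA hB ⊤).trans ?_).symm
    rw [Subgroup.range_subtype, inf_top_eq]
  · refine ((HNNExtension.range_map_inf_map_of hfA hφ hA hB X₁).trans ?_).symm
    rw [Subgroup.range_subtype]
end

section
/- Let F be a free group and let H be a finitely generated subgroup of F × ℤ. Let N = {1} × ℤ ≤ F × ℤ. Then H is isomorphic to the direct product (H / (H ∩ N)) × (H ∩ N); in particular, H is isomorphic to the direct product of a finitely generated free group and a subgroup of ℤ. -/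
/-!
Elements of `N = {1} × ℤ` are central, so `K = H ∩ N` is a central subgroup of `H`, and
`H / K` embeds into `F` via the first projection, hence is free by Nielsen–Schreier. A
surjection onto a free group has a homomorphic section `s`, and since `K` is central,
`(q, k) ↦ s q * k` is an isomorphism `(H / K) × K ≃ H`. Finally `H / K` is finitely generated
and free, so of finite rank, while `K` is carried injectively into `ℤ` by the second projection.
-/

namespace IsFreeGroup

theorem finite_generators (G : Type*) [Group G] [IsFreeGroup G] [Group.FG G] :
    Finite (Generators G) := by
  -- The abelianization of `FreeGroup X` is `ℤ^(X)`, finitely generated only for finite `X`.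
  have : Group.FG (FreeGroup (Generators G)) :=
    Group.fg_of_surjective (f := (toFreeGroup G).toMonoidHom) (toFreeGroup G).surjective
  have : Group.FG (Abelianization (FreeGroup (Generators G))) := QuotientGroup.fg _
  have : AddMonoid.FG (FreeAbelianGroup (Generators G)) :=
    inferInstanceAs (AddMonoid.FG (Additive (Abelianization _)))
  exact Module.Finite.finite_basis (FreeAbelianGroup.basis _)

theorem exists_rightInverse_of_surjective {G Q : Type*} [Group G] [Group Q] [IsFreeGroup Q]
    (f : G →* Q) (hf : Function.Surjective f) : ∃ s : Q →* G, f.comp s = MonoidHom.id Q :=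
  ⟨lift fun a ↦ (hf (of a)).choose,
    ext_hom fun a ↦ by simpa [lift_of] using (hf (of a)).choose_spec⟩

theorem exists_mulEquiv_freeGroup_fin (G : Type*) [Group G] [IsFreeGroup G] [Group.FG G] :
    ∃ n : ℕ, Nonempty (G ≃* FreeGroup (Fin n)) :=
  have := finite_generators G
  ⟨_, ⟨(toFreeGroup G).trans (FreeGroup.freeGroupCongr (Finite.equivFin _))⟩⟩

end IsFreeGroup

namespace Subgroup

variable {G : Type*} [Group G]

theorem normal_of_le_center {K : Subgroup G} (hK : K ≤ center G) : K.Normal :=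
  ⟨fun k hk g ↦ by rwa [mem_center_iff.1 (hK hk) g, mul_inv_cancel_right]⟩

theorem subgroupOf_le_center {N : Subgroup G} (hN : N ≤ center G) (H : Subgroup G) :
    N.subgroupOf H ≤ center H := fun _ hk ↦
  mem_center_iff.2 fun h ↦ Subtype.ext (mem_center_iff.1 (hN hk) h)

theorem nonempty_mulEquiv_quotient_prod_of_le_center (K : Subgroup G) [K.Normal]
    (hK : K ≤ center G) [IsFreeGroup (G ⧸ K)] : Nonempty (G ≃* (G ⧸ K) × K) := by
  obtain ⟨s, hs⟩ := IsFreeGroup.exists_rightInverse_of_surjective (QuotientGroup.mk' K)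
    (QuotientGroup.mk'_surjective K)
  have hs' (q : G ⧸ K) : (s q : G ⧸ K) = q := DFunLike.congr_fun hs q
  let φ := s.noncommCoprod K.subtype fun q k ↦ mem_center_iff.1 (hK k.2) (s q)
  have hφ (p : (G ⧸ K) × K) : φ p = s p.1 * p.2 := rfl
  refine ⟨(MulEquiv.ofBijective φ ⟨?_, ?_⟩).symm⟩
  · rw [injective_iff_map_eq_one]
    rintro ⟨q, k⟩ h
    have hq : q = 1 := by
      simpa [hφ, hs'] using congrArg (QuotientGroup.mk' K) h
    subst hq
    simpa [hφ] using h
  · intro g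
    refine ⟨(↑g, ⟨(s ↑g)⁻¹ * g, ?_⟩), mul_inv_cancel_left _ _⟩
    rw [← QuotientGroup.eq]
    exact hs' g

theorem exists_mulEquiv_of_le_bot_prod {A B : Type*} [Group A] [Group B]
    {L : Subgroup (A × B)} (hL : L ≤ (⊥ : Subgroup A).prod ⊤) :
    ∃ S : Subgroup B, Nonempty (L ≃* S) := by
  have hinj : Function.Injective ((MonoidHom.snd A B).comp L.subtype) := by
    rw [injective_iff_map_eq_one]
    rintro ⟨⟨a, b⟩, hx⟩ (hb : b = 1)
    have ha : a = 1 := (mem_prod.1 (hL hx)).1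
    simp [ha, hb]
  exact ⟨_, ⟨MonoidHom.ofInjective hinj⟩⟩

end Subgroup

theorem QuotientGroup.isFreeGroup_of_ker_eq {G F : Type*} [Group G] [Group F] [IsFreeGroup F]
    (f : G →* F) {K : Subgroup G} [K.Normal] (hK : f.ker = K) : IsFreeGroup (G ⧸ K) :=
  IsFreeGroup.ofMulEquiv
    ((quotientMulEquivOfEq hK.symm).trans (quotientKerEquivRange f)).symm

/-- Every finitely generated subgroup `H` of `F × ℤ` (`F` a free group) decomposes as the
direct product `(H / (H ∩ N)) × (H ∩ N)` where `N = {1} × ℤ`; in particular `H` is the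
direct product of a finitely generated free group and a subgroup of `ℤ`. -/
theorem fg_subgroup_of_free_times_int
    {F : Type*} [Group F] [IsFreeGroup F]
    (H : Subgroup (F × Multiplicative ℤ)) (hH : H.FG) :
    ∃ _hn : ((H ⊓ (⊥ : Subgroup F).prod
        (⊤ : Subgroup (Multiplicative ℤ))).subgroupOf H).Normal,
      Nonempty (↥H ≃*
        (↥H ⧸ (H ⊓ (⊥ : Subgroup F).prod
            (⊤ : Subgroup (Multiplicative ℤ))).subgroupOf H) ×
        ↥((H ⊓ (⊥ : Subgroup F).prod
            (⊤ : Subgroup (Multiplicative ℤ))).subgroupOf H)) ∧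
      ∃ (B : Type) (_i : Group B), IsFreeGroup B ∧ Group.FG B ∧
        ∃ S : Subgroup (Multiplicative ℤ), Nonempty (↥H ≃* B × ↥S) := by
  set N : Subgroup (F × Multiplicative ℤ) := (⊥ : Subgroup F).prod ⊤
  set K : Subgroup H := (H ⊓ N).subgroupOf H
  have hN : N ≤ Subgroup.center _ := by
    rw [Subgroup.center_prod]
    exact Subgroup.prod_mono bot_le Subgroup.center_eq_top.ge
  have hK : K ≤ Subgroup.center H := by
    rw [show K = N.subgroupOf H from Subgroup.inf_subgroupOf_left N H]
    exact Subgroup.subgroupOf_le_center hN H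
  have hKn : K.Normal := Subgroup.normal_of_le_center hK
  have : IsFreeGroup (H ⧸ K) :=
    QuotientGroup.isFreeGroup_of_ker_eq ((MonoidHom.fst F (Multiplicative ℤ)).comp H.subtype)
      (by ext x; simp [K, N, Subgroup.mem_subgroupOf, Subgroup.mem_prod])
  obtain ⟨e⟩ := Subgroup.nonempty_mulEquiv_quotient_prod_of_le_center K hK
  refine ⟨hKn, ⟨e⟩, ?_⟩
  have : Group.FG H := (Group.fg_iff_subgroup_fg H).2 hH
  obtain ⟨n, ⟨eB⟩⟩ := IsFreeGroup.exists_mulEquiv_freeGroup_fin (H ⧸ K)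
  obtain ⟨S, ⟨eS⟩⟩ := Subgroup.exists_mulEquiv_of_le_bot_prod (inf_le_right : H ⊓ N ≤ N)
  exact ⟨FreeGroup (Fin n), _, inferInstance, inferInstance, S,
    ⟨e.trans (eB.prodCongr ((Subgroup.subgroupOfEquivOfLe inf_le_left).trans eS))⟩⟩
end

section
/- Let F be a finitely generated free group and let ψ be an automorphism of F such that ψ^k is an inner automorphism of F for some integer k ≥ 1. Then the semidirect product F ⋊_ψ ℤ contains a finite-index subgroup isomorphic to F × ℤ. -/
/-!
If `ψᵏ` is conjugation by `c`, then `z = (c⁻¹, tᵏ)` commutes with `F` inside `F ⋊_ψ ℤ`, so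
`(x, n) ↦ x zⁿ` is a homomorphism `F × ℤ → F ⋊_ψ ℤ`. It is injective because `zⁿ` projects to
`tᵏⁿ`, and its image is the preimage of `kℤ` under the projection to `ℤ`, of index `k`.
-/

open SemidirectProduct Subgroup

namespace SemidirectProduct

variable {N G : Type*} [Group N] [Group G] {φ : G →* MulAut N}

theorem right_zpow (z : N ⋊[φ] G) (n : ℤ) : (z ^ n).right = z.right ^ n :=
  map_zpow rightHom z n

theorem commute_inl_mk_inv_of_forall_apply_eq_conj {g : G} {c : N}
    (h : ∀ x, φ g x = c * x * c⁻¹) (x : N) : Commute (inl x) (⟨c⁻¹, g⟩ : N ⋊[φ] G) := by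
  ext
  · simp [mul_left, h, mul_assoc]
  · simp [mul_right]

def inlMulZPowers (z : N ⋊[φ] G) (hz : ∀ x, Commute (inl x) z) :
    N × Multiplicative ℤ →* N ⋊[φ] G :=
  MonoidHom.noncommCoprod inl (zpowersHom _ z) fun x n => (hz x).zpow_right n

variable {z : N ⋊[φ] G} (hz : ∀ x, Commute (inl x) z)

theorem inlMulZPowers_apply (p : N × Multiplicative ℤ) :
    inlMulZPowers z hz p = inl p.1 * z ^ p.2.toAdd := rfl

theorem right_inlMulZPowers (p : N × Multiplicative ℤ) :
    (inlMulZPowers z hz p).right = z.right ^ p.2.toAdd := by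
  simp [inlMulZPowers_apply, mul_right, right_zpow]

theorem inlMulZPowers_injective (hfin : ¬IsOfFinOrder z.right) :
    Function.Injective (inlMulZPowers z hz) := by
  rintro ⟨x, m⟩ ⟨y, n⟩ h
  obtain rfl : m = n := by
    have := congrArg right h
    rw [right_inlMulZPowers, right_inlMulZPowers] at this
    exact Multiplicative.toAdd.injective (injective_zpow_iff_not_isOfFinOrder.mpr hfin this)
  rw [inlMulZPowers_apply, inlMulZPowers_apply, mul_left_inj, inl_inj] at h
  exact Prod.ext h rfl

theorem range_inlMulZPowers :
    (inlMulZPowers z hz).range = (zpowers z.right).comap rightHom := by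
  apply le_antisymm
  · rintro _ ⟨p, rfl⟩
    exact ⟨p.2.toAdd, (right_inlMulZPowers hz p).symm⟩
  · rintro g ⟨n, hn⟩
    obtain ⟨x, hx⟩ : g * (z ^ n)⁻¹ ∈ (inl : N →* N ⋊[φ] G).range := by
      rw [range_inl_eq_ker_rightHom, MonoidHom.mem_ker, map_mul, map_inv, map_zpow]
      exact mul_inv_eq_one.mpr hn.symm
    exact ⟨(x, .ofAdd n), by simp [inlMulZPowers_apply, hx]⟩

end SemidirectProduct

theorem Multiplicative.index_zpowers_ofAdd (k : ℤ) :
    (zpowers (ofAdd k)).index = k.natAbs := by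
  have : zpowers (ofAdd k) = (AddSubgroup.zmultiples k).toSubgroup := by
    ext x
    rw [mem_zpowers_iff]
    change _ ↔ toAdd x ∈ AddSubgroup.zmultiples k
    rw [AddSubgroup.mem_zmultiples_iff]
    refine exists_congr fun n => ?_
    rw [← ofAdd_zsmul]
    exact ofAdd.eq_symm_apply.symm
  rw [this, AddSubgroup.index_toSubgroup, Int.index_zmultiples]

theorem semidirect_virtually_product_general
    {F : Type*} [Group F] (ψ : MulAut F)
    (k : ℕ) (hk : 1 ≤ k) (c : F) (hinner : ∀ x : F, (ψ ^ k) x = c * x * c⁻¹) :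
    ∃ K : Subgroup (F ⋊[zpowersHom (MulAut F) ψ] Multiplicative ℤ),
      K.index ≠ 0 ∧ Nonempty (↥K ≃* F × Multiplicative ℤ) := by
  have hcomm := commute_inl_mk_inv_of_forall_apply_eq_conj
    (φ := zpowersHom (MulAut F) ψ) (g := .ofAdd (k : ℤ)) (by simpa using hinner)
  have hk₀ : (k : ℤ) ≠ 0 := by omega
  have hinfinite : ¬IsOfFinOrder (Multiplicative.ofAdd (k : ℤ)) :=
    isOfFinOrder_ofAdd_iff.not.mpr (not_isOfFinAddOrder_of_isAddTorsionFree hk₀)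
  have hinj := inlMulZPowers_injective hcomm hinfinite
  refine ⟨(inlMulZPowers _ hcomm).range, ?_, ⟨(MonoidHom.ofInjective hinj).symm⟩⟩
  rw [range_inlMulZPowers, index_comap_of_surjective _ rightHom_surjective,
    Multiplicative.index_zpowers_ofAdd]
  omega

/-- If `ψ` is an automorphism of a finitely generated free group `F` with `ψᵏ` inner for
some `k ≥ 1`, then the semidirect product `F ⋊_ψ ℤ` contains a finite-index subgroup
isomorphic to `F × ℤ`. -/
theorem semidirect_virtually_product
    {F : Type*} [Group F] [IsFreeGroup F] [Group.FG F] (ψ : MulAut F)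
    (k : ℕ) (hk : 1 ≤ k) (c : F) (hinner : ∀ x : F, (ψ ^ k) x = c * x * c⁻¹) :
    ∃ K : Subgroup (F ⋊[zpowersHom (MulAut F) ψ] Multiplicative ℤ),
      K.index ≠ 0 ∧ Nonempty (↥K ≃* F × Multiplicative ℤ) :=
  semidirect_virtually_product_general ψ k hk c hinner
end
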